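/- arXiv:2604.11501 — 2 statements merged into one kernel-verified Lean document; each statement's English description precedes it below -/
import Mathlib

section
/- For a symmetric positive semidefinite matrix M ∈ ℝ^{n×n} and any matrix P ∈ ℝ^{n×r} with orthonormal columns, Tr(Pᵀ M P) ≤ λ_1 + λ_2 + ⋯ + λ_r, the sum of the r largest eigenvalues of M, with equality when the columns of P are eigenvectors of M corresponding to those eigenvalues (Ky Fan maximum principle). -/
/-!
Write `Q = Uᵀ P`, so that `Tr(Pᵀ M P) = ∑ᵢ μᵢ wᵢ` with `wᵢ = (Q Qᵀ)ᵢᵢ`. Since `Q` has orthonormal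
columns, `Q Qᵀ` is a symmetric idempotent, so each `wᵢ` lies in `[0, 1]`, and `∑ᵢ wᵢ = Tr(Qᵀ Q) = r`.
Among such weights, the sum `∑ᵢ μᵢ wᵢ` for antitone `μ` is largest when the weight sits on the first
`r` indices (bathtub principle): with `c = μ_r`, each term `(μᵢ - c)(tᵢ - wᵢ)` is nonnegative for the
indicator `t` of those indices.
-/

open Matrix

theorem Finset.sum_mul_le_sum_mul_of_sub_mul_sub_nonneg {ι R : Type*} [CommRing R] [PartialOrder R]
    [IsOrderedRing R] (s : Finset ι) (μ u v : ι → R) (c : R)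
    (huv : ∑ i ∈ s, u i = ∑ i ∈ s, v i) (h : ∀ i ∈ s, 0 ≤ (μ i - c) * (v i - u i)) :
    ∑ i ∈ s, μ i * u i ≤ ∑ i ∈ s, μ i * v i := by
  have hsplit : ∑ i ∈ s, μ i * v i - ∑ i ∈ s, μ i * u i
      = ∑ i ∈ s, (μ i - c) * (v i - u i) + c * (∑ i ∈ s, v i - ∑ i ∈ s, u i) := by
    simp only [Finset.mul_sum, ← Finset.sum_sub_distrib, ← Finset.sum_add_distrib]
    exact Finset.sum_congr rfl fun i _ => by ring
  rw [← sub_nonneg, hsplit, huv, sub_self, mul_zero, add_zero]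
  exact Finset.sum_nonneg h

theorem Fin.sum_castLE_eq_sum_ite {M : Type*} [AddCommMonoid M] {r n : ℕ} (hrn : r ≤ n)
    (g : Fin n → M) :
    ∑ i : Fin r, g (Fin.castLE hrn i) = ∑ i : Fin n, if (i : ℕ) < r then g i else 0 := by
  refine Fintype.sum_of_injective _ (Fin.castLE_injective hrn) _ _ ?_ fun i => by simp
  intro i hi
  rw [if_neg]
  exact fun hir => hi ⟨⟨i, hir⟩, rfl⟩

theorem Fin.sum_mul_le_sum_castLE_of_antitone {R : Type*} [CommRing R] [LinearOrder R]
    [IsOrderedRing R] {r n : ℕ} (hrn : r ≤ n) {μ : Fin n → R} (hμ : Antitone μ) {w : Fin n → R}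
    (hw₀ : ∀ i, 0 ≤ w i) (hw₁ : ∀ i, w i ≤ 1) (hw : ∑ i, w i = r) :
    ∑ i, μ i * w i ≤ ∑ i : Fin r, μ (Fin.castLE hrn i) := by
  rcases Nat.eq_zero_or_pos n with rfl | hn
  · obtain rfl : r = 0 := Nat.le_zero.mp hrn
    simp
  -- for `r = 0` the truncated index gives `c = μ 0`, which still bounds `μ` from above
  set c := μ ⟨r - 1, by omega⟩
  let t : Fin n → R := fun i => if (i : ℕ) < r then 1 else 0
  have hrhs : ∑ i : Fin r, μ (Fin.castLE hrn i) = ∑ i, μ i * t i := by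
    rw [Fin.sum_castLE_eq_sum_ite]
    exact Finset.sum_congr rfl fun i _ => by simp only [t, mul_ite, mul_one, mul_zero]
  have ht : ∑ i, t i = r := by
    simpa [t] using (Fin.sum_castLE_eq_sum_ite hrn (fun _ => (1 : R))).symm
  rw [hrhs]
  refine Finset.sum_mul_le_sum_mul_of_sub_mul_sub_nonneg _ μ w t c (hw.trans ht.symm) ?_
  intro i _
  by_cases hir : (i : ℕ) < r
  · have hμc : c ≤ μ i := hμ (Fin.le_def.mpr (by dsimp only; omega))
    simp only [t, if_pos hir]
    exact mul_nonneg (sub_nonneg.mpr hμc) (sub_nonneg.mpr (hw₁ i))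
  · have hμc : μ i ≤ c := hμ (Fin.le_def.mpr (by dsimp only; omega))
    simp only [t, if_neg hir]
    exact mul_nonneg_of_nonpos_of_nonpos (sub_nonpos.mpr hμc) (sub_nonpos.mpr (hw₀ i))

namespace Matrix

variable {m n R : Type*} [Fintype m] [Fintype n]

theorem trace_transpose_mul_diagonal_mul [CommRing R] [DecidableEq m] (Q : Matrix m n R)
    (μ : m → R) : (Qᵀ * diagonal μ * Q).trace = ∑ i, μ i * (Q * Qᵀ) i i := by
  rw [trace_mul_comm, ← Matrix.mul_assoc]
  simp only [trace, diag, mul_diagonal, mul_comm]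

theorem isIdempotentElem_mul_transpose [CommRing R] {Q : Matrix m n R} [DecidableEq n]
    (hQ : Qᵀ * Q = 1) : IsIdempotentElem (Q * Qᵀ) := by
  rw [IsIdempotentElem, Matrix.mul_assoc, ← Matrix.mul_assoc Qᵀ, hQ, Matrix.one_mul]

theorem diag_mem_Icc_of_isIdempotentElem [CommRing R] [LinearOrder R] [IsStrictOrderedRing R]
    {A : Matrix m m R} (hA : IsIdempotentElem A) (hAt : A.IsSymm) (i : m) :
    A i i ∈ Set.Icc 0 1 := by
  have hsq : A i i = ∑ k, A i k ^ 2 := by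
    conv_lhs => rw [← hA.eq]
    simp only [mul_apply, sq, hAt.apply i]
  have h₀ : 0 ≤ A i i := hsq ▸ Finset.sum_nonneg fun k _ => sq_nonneg _
  have h₁ : A i i ^ 2 ≤ A i i :=
    hsq ▸ Finset.single_le_sum (f := fun k => A i k ^ 2) (fun k _ => sq_nonneg _)
      (Finset.mem_univ i)
  exact ⟨h₀, by nlinarith⟩

end Matrix

theorem ky_fan_max_principle_general (n r : ℕ) (hrn : r ≤ n)
    (M U : Matrix (Fin n) (Fin n) ℝ) (μ : Fin n → ℝ)
    (hU : Uᵀ * U = 1) (hdecomp : M = U * Matrix.diagonal μ * Uᵀ)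
    (hmono : Antitone μ) :
    (∀ P : Matrix (Fin n) (Fin r) ℝ, Pᵀ * P = 1 →
      (Pᵀ * M * P).trace ≤ ∑ i : Fin r, μ (Fin.castLE hrn i)) ∧
    (((U.submatrix id (Fin.castLE hrn))ᵀ * M * (U.submatrix id (Fin.castLE hrn))).trace
      = ∑ i : Fin r, μ (Fin.castLE hrn i)) := by
  have hUUt : U * Uᵀ = 1 := mul_eq_one_comm.mp hU
  refine ⟨fun P hP => ?_, ?_⟩
  · set Q := Uᵀ * P
    have hQ : Qᵀ * Q = 1 := by
      rw [transpose_mul, transpose_transpose, Matrix.mul_assoc, ← Matrix.mul_assoc U, hUUt,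
        Matrix.one_mul, hP]
    have hPMP : Pᵀ * M * P = Qᵀ * diagonal μ * Q := by
      simp only [Q, hdecomp, transpose_mul, transpose_transpose, Matrix.mul_assoc]
    have hdiag := diag_mem_Icc_of_isIdempotentElem (isIdempotentElem_mul_transpose hQ)
      (transpose_mul Q Qᵀ)
    have hsum : (Q * Qᵀ).trace = r := by
      rw [trace_mul_comm, hQ, trace_one, Fintype.card_fin]
    rw [hPMP, trace_transpose_mul_diagonal_mul]
    exact Fin.sum_mul_le_sum_castLE_of_antitone hrn hmono (fun i => (hdiag i).1)
      (fun i => (hdiag i).2) hsum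
  · have hUMU : Uᵀ * M * U = diagonal μ := by
      rw [hdecomp, ← Matrix.mul_assoc, ← Matrix.mul_assoc, hU, Matrix.one_mul, Matrix.mul_assoc,
        hU, Matrix.mul_one]
    have hsub : (U.submatrix id (Fin.castLE hrn))ᵀ * M * U.submatrix id (Fin.castLE hrn)
        = (Uᵀ * M * U).submatrix (Fin.castLE hrn) (Fin.castLE hrn) := by
      rw [submatrix_mul _ _ _ id _ Function.bijective_id,
        submatrix_mul _ _ _ id _ Function.bijective_id, submatrix_id_id, transpose_submatrix]
    rw [hsub, hUMU, submatrix_diagonal _ _ (Fin.castLE_injective hrn), trace_diagonal]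
    rfl

/-- Ky Fan maximum principle: for symmetric PSD `M = U diag(λ) Uᵀ` with
orthogonal `U` and eigenvalues `λ` in nonincreasing order, any orthonormal
`P ∈ ℝ^{n×r}` satisfies `Tr(PᵀMP) ≤ λ₁ + ⋯ + λ_r`, with equality for the
matrix of the top-`r` eigenvectors. -/
theorem ky_fan_max_principle (n r : ℕ) (hrn : r ≤ n)
    (M U : Matrix (Fin n) (Fin n) ℝ) (μ : Fin n → ℝ)
    (hMsymm : Mᵀ = M) (hMpsd : M.PosSemidef)
    (hU : Uᵀ * U = 1) (hdecomp : M = U * Matrix.diagonal μ * Uᵀ)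
    (hmono : Antitone μ) :
    (∀ P : Matrix (Fin n) (Fin r) ℝ, Pᵀ * P = 1 →
      (Pᵀ * M * P).trace ≤ ∑ i : Fin r, μ (Fin.castLE hrn i)) ∧
    (((U.submatrix id (Fin.castLE hrn))ᵀ * M * (U.submatrix id (Fin.castLE hrn))).trace
      = ∑ i : Fin r, μ (Fin.castLE hrn i)) :=
  ky_fan_max_principle_general n r hrn M U μ hU hdecomp hmono
end

section
/- For a symmetric PSD matrix M and orthonormal P ∈ ℝ^{n×r}, Tr((I − PPᵀ) M) = Tr(M) − Tr(Pᵀ M P), and this quantity is minimized over all orthonormal P by taking the columns of P to be the top-r eigenvectors of M, with minimum value λ_{r+1} + ⋯ + λ_n. -/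
open Matrix

private lemma aux_trace_conj (n r : ℕ) (μ : Fin n → ℝ) (Q : Matrix (Fin n) (Fin r) ℝ) :
    (Qᵀ * Matrix.diagonal μ * Q).trace = ∑ i, μ i * ∑ j, (Q i j)^2 := by
  rw [Matrix.mul_assoc]
  simp only [Matrix.trace, Matrix.diag, Matrix.mul_apply, Matrix.transpose_apply,
    Matrix.diagonal_apply, ite_mul, zero_mul, Finset.sum_ite_eq, Finset.mem_univ,
    if_true]
  rw [Finset.sum_comm]
  congr 1; ext i
  rw [Finset.mul_sum]
  congr 1; ext j
  ring

private lemma aux_card_filter (n r : ℕ) (hrn : r ≤ n) :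
    (Finset.univ.filter (fun i : Fin n => (i : ℕ) < r)).card = r := by
  have : Finset.univ.filter (fun i : Fin n => (i : ℕ) < r)
      = Finset.univ.map ⟨Fin.castLE hrn, Fin.castLE_injective hrn⟩ := by
    ext i
    simp only [Finset.mem_filter, Finset.mem_univ, true_and, Finset.mem_map,
      Function.Embedding.coeFn_mk]
    constructor
    · intro h; exact ⟨⟨i, h⟩, rfl⟩
    · rintro ⟨j, -, rfl⟩; exact j.isLt
  rw [this]; simp

private lemma aux_sum_le (n r : ℕ) (hrn : r ≤ n) (μ s : Fin n → ℝ)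
    (hmono : Antitone μ) (hμ0 : ∀ i, 0 ≤ μ i)
    (hs0 : ∀ i, 0 ≤ s i) (hs1 : ∀ i, s i ≤ 1)
    (hsum : ∑ i, s i = r) :
    ∑ i, μ i * s i ≤ ∑ i ∈ Finset.univ.filter (fun i : Fin n => (i : ℕ) < r), μ i := by
  classical
  set A := Finset.univ.filter (fun i : Fin n => (i : ℕ) < r) with hA
  set B := Finset.univ.filter (fun i : Fin n => ¬ (i : ℕ) < r) with hB
  set c : ℝ := if h : r < n then μ ⟨r, h⟩ else 0 with hc
  have hc1 : ∀ i : Fin n, (i : ℕ) < r → c ≤ μ i := by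
    intro i hi
    by_cases h : r < n
    · rw [hc, dif_pos h]
      exact hmono (by exact_mod_cast le_of_lt hi : i ≤ (⟨r, h⟩ : Fin n))
    · rw [hc, dif_neg h]; exact hμ0 i
  have hc2 : ∀ i : Fin n, r ≤ (i : ℕ) → μ i ≤ c := by
    intro i hi
    have h : r < n := lt_of_le_of_lt hi i.isLt
    rw [hc, dif_pos h]
    exact hmono (by exact_mod_cast hi : (⟨r, h⟩ : Fin n) ≤ i)
  have hsplit : ∀ f : Fin n → ℝ, ∑ i ∈ A, f i + ∑ i ∈ B, f i = ∑ i, f i := by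
    intro f; rw [hA, hB]; exact Finset.sum_filter_add_sum_filter_not _ _ _
  have hcard : (A.card : ℝ) = r := by rw [hA]; exact_mod_cast aux_card_filter n r hrn
  -- key: ∑_B μ s ≤ ∑_A μ (1 - s)
  have h1 : ∑ i ∈ B, μ i * s i ≤ c * ∑ i ∈ B, s i := by
    rw [Finset.mul_sum]
    apply Finset.sum_le_sum
    intro i hi
    have : r ≤ (i : ℕ) := by
      simp only [hB, Finset.mem_filter, not_lt] at hi; exact hi.2
    exact mul_le_mul_of_nonneg_right (hc2 i this) (hs0 i)
  have h2 : c * ∑ i ∈ B, s i = c * ∑ i ∈ A, (1 - s i) := by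
    congr 1
    have e1 : ∑ i ∈ B, s i = (r : ℝ) - ∑ i ∈ A, s i := by
      have := hsplit s; rw [hsum] at this; linarith
    have e2 : ∑ i ∈ A, (1 - s i) = (r : ℝ) - ∑ i ∈ A, s i := by
      rw [Finset.sum_sub_distrib, Finset.sum_const, nsmul_eq_mul, mul_one, hcard]
    rw [e1, e2]
  have h3 : ∑ i ∈ A, c * (1 - s i) ≤ ∑ i ∈ A, μ i * (1 - s i) := by
    apply Finset.sum_le_sum
    intro i hi
    have : (i : ℕ) < r := by
      simp only [hA, Finset.mem_filter] at hi; exact hi.2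
    exact mul_le_mul_of_nonneg_right (hc1 i this) (by linarith [hs1 i])
  have h4 : ∑ i ∈ B, μ i * s i ≤ ∑ i ∈ A, μ i * (1 - s i) := by
    calc ∑ i ∈ B, μ i * s i ≤ c * ∑ i ∈ B, s i := h1
      _ = c * ∑ i ∈ A, (1 - s i) := h2
      _ = ∑ i ∈ A, c * (1 - s i) := by rw [Finset.mul_sum]
      _ ≤ ∑ i ∈ A, μ i * (1 - s i) := h3
  have h5 : ∑ i, μ i * s i = ∑ i ∈ A, μ i * s i + ∑ i ∈ B, μ i * s i :=
    (hsplit _).symm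
  have h6 : ∑ i ∈ A, μ i * s i + ∑ i ∈ A, μ i * (1 - s i) = ∑ i ∈ A, μ i := by
    rw [← Finset.sum_add_distrib]
    apply Finset.sum_congr rfl
    intro i _; ring
  rw [h5, ← h6]
  linarith

/-- `Tr((I − PPᵀ)M) = Tr(M) − Tr(PᵀMP)`, and this residual is minimized over
orthonormal `P` by the top-`r` eigenvectors, with minimum `λ_{r+1} + ⋯ + λ_n`. -/
theorem residual_trace_minimization (n r : ℕ) (hrn : r ≤ n)
    (M U : Matrix (Fin n) (Fin n) ℝ) (μ : Fin n → ℝ)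
    (hMpsd : M.PosSemidef)
    (hU : Uᵀ * U = 1) (hdecomp : M = U * Matrix.diagonal μ * Uᵀ)
    (hmono : Antitone μ) :
    (∀ P : Matrix (Fin n) (Fin r) ℝ, Pᵀ * P = 1 →
      ((1 - P * Pᵀ) * M).trace = M.trace - (Pᵀ * M * P).trace) ∧
    (∀ P : Matrix (Fin n) (Fin r) ℝ, Pᵀ * P = 1 →
      (∑ i ∈ Finset.univ.filter (fun i : Fin n => r ≤ (i : ℕ)), μ i) ≤
        ((1 - P * Pᵀ) * M).trace) ∧
    ((1 - (U.submatrix id (Fin.castLE hrn)) * (U.submatrix id (Fin.castLE hrn))ᵀ) * M).trace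
      = ∑ i ∈ Finset.univ.filter (fun i : Fin n => r ≤ (i : ℕ)), μ i := by
  classical
  have hUUT : U * Uᵀ = 1 := mul_eq_one_comm.mp hU
  -- part 1
  have part1 : ∀ P : Matrix (Fin n) (Fin r) ℝ, Pᵀ * P = 1 →
      ((1 - P * Pᵀ) * M).trace = M.trace - (Pᵀ * M * P).trace := by
    intro P hP
    rw [Matrix.sub_mul, Matrix.one_mul, Matrix.trace_sub]
    congr 1
    rw [Matrix.mul_assoc, Matrix.trace_mul_comm, Matrix.mul_assoc]
  -- trace of M
  have htrM : M.trace = ∑ i, μ i := by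
    rw [hdecomp, Matrix.trace_mul_cycle, hU, Matrix.one_mul,
      Matrix.trace_diagonal]
  -- eigenvalues nonneg
  have hμ0 : ∀ i, 0 ≤ μ i := by
    have hD : Matrix.diagonal μ = Uᵀ * M * U := by
      rw [hdecomp]
      rw [show Uᵀ * (U * Matrix.diagonal μ * Uᵀ) * U
          = (Uᵀ * U) * Matrix.diagonal μ * (Uᵀ * U) by
        simp only [Matrix.mul_assoc]]
      rw [hU, Matrix.one_mul, Matrix.mul_one]
    have : (Matrix.diagonal μ).PosSemidef := by
      rw [hD]
      have := hMpsd.conjTranspose_mul_mul_same U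
      simpa using this
    intro i
    exact Matrix.posSemidef_diagonal_iff.mp this i
  -- conjugation identity
  have hconj : ∀ P : Matrix (Fin n) (Fin r) ℝ,
      Pᵀ * M * P = (Uᵀ * P)ᵀ * Matrix.diagonal μ * (Uᵀ * P) := by
    intro P
    rw [hdecomp]
    simp only [Matrix.transpose_mul, Matrix.transpose_transpose, Matrix.mul_assoc]
  -- main bound on Tr(PᵀMP)
  have hbound : ∀ P : Matrix (Fin n) (Fin r) ℝ, Pᵀ * P = 1 →
      (Pᵀ * M * P).trace ≤ ∑ i ∈ Finset.univ.filter (fun i : Fin n => (i : ℕ) < r), μ i := by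
    intro P hP
    set Q := Uᵀ * P with hQdef
    have hQQ : Qᵀ * Q = 1 := by
      rw [hQdef, Matrix.transpose_mul, Matrix.transpose_transpose]
      rw [show Pᵀ * U * (Uᵀ * P) = Pᵀ * (U * Uᵀ) * P by simp only [Matrix.mul_assoc]]
      rw [hUUT, Matrix.mul_one, hP]
    set s : Fin n → ℝ := fun i => ∑ j, (Q i j)^2 with hs
    have htr : (Pᵀ * M * P).trace = ∑ i, μ i * s i := by
      rw [hconj P, ← hQdef, aux_trace_conj]
    have hs0 : ∀ i, 0 ≤ s i := fun i => Finset.sum_nonneg fun j _ => sq_nonneg _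
    have hsum : ∑ i, s i = (r : ℝ) := by
      have : ∑ i, s i = (Q * Qᵀ).trace := by
        simp only [hs, Matrix.trace, Matrix.diag, Matrix.mul_apply,
          Matrix.transpose_apply, sq]
      rw [this, Matrix.trace_mul_comm, hQQ, Matrix.trace_one]
      simp
    have hs1 : ∀ i, s i ≤ 1 := by
      intro i
      set B := (1 : Matrix (Fin n) (Fin n) ℝ) - Q * Qᵀ with hBdef
      have hBsymm : Bᵀ = B := by
        rw [hBdef]
        simp [Matrix.transpose_sub, Matrix.transpose_mul, Matrix.transpose_transpose]
      have hproj : (Q * Qᵀ) * (Q * Qᵀ) = Q * Qᵀ := by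
        rw [show Q * Qᵀ * (Q * Qᵀ) = Q * (Qᵀ * Q) * Qᵀ by simp only [Matrix.mul_assoc]]
        rw [hQQ, Matrix.mul_one]
      have hBB : B * Bᵀ = B := by
        rw [hBsymm, hBdef, Matrix.sub_mul, Matrix.one_mul, Matrix.mul_sub,
          Matrix.mul_one, hproj, sub_self, sub_zero]
      have hdiag : 0 ≤ B i i := by
        have h := Matrix.ext_iff.mpr hBB i i
        rw [← h]
        rw [Matrix.mul_apply]
        apply Finset.sum_nonneg
        intro j _
        rw [Matrix.transpose_apply]
        exact mul_self_nonneg _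
      have hBii : B i i = 1 - s i := by
        rw [hBdef]
        simp only [Matrix.sub_apply, Matrix.one_apply_eq, Matrix.mul_apply,
          Matrix.transpose_apply, hs, sq]
      linarith [hdiag, hBii ▸ hdiag]
    rw [htr]
    exact aux_sum_le n r hrn μ s hmono hμ0 hs0 hs1 hsum
  -- sum split
  have hsum_split : ∑ i, μ i =
      (∑ i ∈ Finset.univ.filter (fun i : Fin n => (i : ℕ) < r), μ i) +
      (∑ i ∈ Finset.univ.filter (fun i : Fin n => r ≤ (i : ℕ)), μ i) := by
    rw [← Finset.sum_filter_add_sum_filter_not Finset.univ (fun i : Fin n => (i : ℕ) < r) μ]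
    congr 1
    apply Finset.sum_congr _ (fun _ _ => rfl)
    apply Finset.filter_congr
    intro i _
    simp [not_lt]
  refine ⟨part1, ?_, ?_⟩
  · intro P hP
    rw [part1 P hP, htrM]
    have := hbound P hP
    linarith [hsum_split]
  · -- optimal P
    set P0 : Matrix (Fin n) (Fin r) ℝ := U.submatrix id (Fin.castLE hrn) with hP0def
    have hQ0 : Uᵀ * P0 = (1 : Matrix (Fin n) (Fin n) ℝ).submatrix id (Fin.castLE hrn) := by
      ext i j
      have h := Matrix.ext_iff.mpr hU i (Fin.castLE hrn j)
      simp only [Matrix.mul_apply, Matrix.transpose_apply, Matrix.submatrix_apply,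
        id_eq, hP0def] at h ⊢
      exact h
    have hP0 : P0ᵀ * P0 = 1 := by
      ext j k
      have h := Matrix.ext_iff.mpr hU (Fin.castLE hrn j) (Fin.castLE hrn k)
      simp only [Matrix.mul_apply, Matrix.transpose_apply, Matrix.submatrix_apply,
        id_eq, hP0def] at h ⊢
      rw [h]
      by_cases hjk : j = k
      · subst hjk; simp [Matrix.one_apply]
      · rw [Matrix.one_apply_ne, Matrix.one_apply_ne hjk]
        intro e
        exact hjk (Fin.castLE_injective hrn e)
    have htr0 : (P0ᵀ * M * P0).trace
        = ∑ i ∈ Finset.univ.filter (fun i : Fin n => (i : ℕ) < r), μ i := by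
      rw [hconj P0, hQ0, aux_trace_conj]
      have hs0val : ∀ i : Fin n,
          (∑ j : Fin r, (((1 : Matrix (Fin n) (Fin n) ℝ).submatrix id
            (Fin.castLE hrn)) i j)^2) = if (i : ℕ) < r then 1 else 0 := by
        intro i
        by_cases h : (i : ℕ) < r
        · rw [if_pos h]
          rw [Finset.sum_eq_single ⟨(i : ℕ), h⟩]
          · simp [Matrix.one_apply, Fin.ext_iff]
          · intro j _ hj
            have : i ≠ Fin.castLE hrn j := by
              intro e
              apply hj
              rw [Fin.ext_iff] at e ⊢
              simp at e ⊢
              omega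
            simp [Matrix.one_apply, this]
          · intro h'; exact absurd (Finset.mem_univ _) h'
        · rw [if_neg h]
          apply Finset.sum_eq_zero
          intro j _
          have : i ≠ Fin.castLE hrn j := by
            intro e
            apply h
            rw [e]
            exact j.isLt
          simp [Matrix.one_apply, this]
      calc ∑ i, μ i * ∑ j : Fin r, (((1 : Matrix (Fin n) (Fin n) ℝ).submatrix id
              (Fin.castLE hrn)) i j)^2
          = ∑ i : Fin n, μ i * (if (i : ℕ) < r then 1 else 0) := by
            apply Finset.sum_congr rfl; intro i _; rw [hs0val i]
        _ = ∑ i : Fin n, (if (i : ℕ) < r then μ i else 0) := by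
            apply Finset.sum_congr rfl; intro i _
            by_cases h : (i : ℕ) < r <;> simp [h]
        _ = ∑ i ∈ Finset.univ.filter (fun i : Fin n => (i : ℕ) < r), μ i := by
            rw [Finset.sum_filter]
    rw [part1 P0 hP0, htrM, htr0]
    linarith [hsum_split]
end
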